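/- arXiv:2603.27893 — 2 statements merged into one kernel-verified Lean document; each statement's English description precedes it below -/
import Mathlib

section
/- (Theorem 2, time-varying mode scheduling.) Suppose ℓ ≥ 0 and V_f ≥ 0 everywhere, the terminal conditions hold (𝕏_f ⊆ 𝕏, and for every y ∈ 𝕏_f there exists w ∈ 𝕌 with f(y,w) ∈ 𝕏_f and V_f(f(y,w)) ≤ V_f(y) − ℓ(y,w)), and there is a K-function α₁ with ℓ(y,w) ≥ α₁(‖y‖) for all y ∈ 𝕏, w ∈ 𝕌. Let a : ℕ → ℝ with a(k) ≥ 0, M : ℕ → ℕ with 1 ≤ M(k) ≤ N, and let x : ℕ → ℝⁿ be a closed-loop trajectory: for each k there is an optimal pair (v*_k, z*_k) for P_N(x(k)) and an input sequence u_k that is (a(k), M(k))-admissible at x(k) relative to (v*_k, z*_k), with x(k+1) = f(x(k), u_k(0)). Then: (i) x(k) ∈ 𝕏 and u_k(0) ∈ 𝕌 for all k ∈ ℕ; and (ii) if there exist K_s ∈ ℕ and ā ∈ (0,1] such that a(k) ≤ 1 − ā for all k ≥ K_s, then V_N*(x(k+1)) ≤ V_N*(x(k)) − ā·α₁(‖x(k)‖)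 for all k ≥ K_s and x(k) → 0 as k → ∞. -/
section Framework

variable {S I : Type*}

/-- The trajectory generated by dynamics `f` from initial state `x` under input sequence `v`. -/
def traj (f : S → I → S) (x : S) (v : ℕ → I) : ℕ → S
  | 0 => x
  | k + 1 => f (traj f x v k) (v k)

/-- `v` is an `N`-feasible input sequence from `x`. -/
def Feasible (f : S → I → S) (X : Set S) (U : Set I) (Xf : Set S)
    (N : ℕ) (x : S) (v : ℕ → I) : Prop :=
  (∀ i < N, traj f x v i ∈ X ∧ v i ∈ U) ∧ traj f x v N ∈ Xf

/-- The MPC cost `V_N(x, v)`. -/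
noncomputable def mpcCost (f : S → I → S) (l : S → I → ℝ) (Vf : S → ℝ)
    (N : ℕ) (x : S) (v : ℕ → I) : ℝ :=
  (∑ i ∈ Finset.range N, l (traj f x v i) (v i)) + Vf (traj f x v N)

/-- `(v, z)` is an optimal pair for the problem `P_N(x)`. -/
def OptPair (f : S → I → S) (X : Set S) (U : Set I) (Xf : Set S)
    (l : S → I → ℝ) (Vf : S → ℝ) (N : ℕ) (x : S) (v : ℕ → I) (z : ℕ → S) : Prop :=
  Feasible f X U Xf N x v ∧ (∀ i, z i = traj f x v i) ∧
    ∀ w, Feasible f X U Xf N x w → mpcCost f l Vf N x v ≤ mpcCost f l Vf N x w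

/-- `u` is an `(a, M)`-admissible input sequence at `x`, relative to the optimal pair `(v, z)`. -/
def Adm (f : S → I → S) (X : Set S) (U : Set I) (l : S → I → ℝ)
    (a : ℝ) (M : ℕ) (x : S) (v : ℕ → I) (z : ℕ → S) (u : ℕ → I) : Prop :=
  (∀ i < M, traj f x u i ∈ X ∧ u i ∈ U) ∧
  ((∑ i ∈ Finset.range M, l (traj f x u i) (u i))
      - ∑ i ∈ Finset.range M, l (z i) (v i)) ≤ a * l x (u 0) ∧
  traj f x u M = z M

/-- The safety–stability set `𝕊(x)`. -/
def S2Set (f : S → I → S) (X : Set S) (U : Set I) (l : S → I → ℝ)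
    (a : ℝ) (M : ℕ) (x : S) (v : ℕ → I) (z : ℕ → S) : Set I :=
  {w | ∃ u, Adm f X U l a M x v z u ∧ u 0 = w}

/-- The value function `V_N^*`. -/
noncomputable def VStar (f : S → I → S) (X : Set S) (U : Set I) (Xf : Set S)
    (l : S → I → ℝ) (Vf : S → ℝ) (N : ℕ) (y : S) : ℝ :=
  sInf (mpcCost f l Vf N y '' {v | Feasible f X U Xf N y v})

/-- A K-function: continuous, strictly increasing on `[0, ∞)`, vanishing at `0`. -/
def IsKFun (α : ℝ → ℝ) : Prop :=
  Continuous α ∧ StrictMonoOn α (Set.Ici 0) ∧ α 0 = 0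

end Framework

/-!
Splicing the admissible inputs `u(0), …, u(M-1)` onto the tail `v*(M), …, v*(N-1)` of the
optimal sequence (the trajectories meet at `z*(M)`), appending the terminal-set input at the end
and dropping the first input gives an `N`-feasible sequence from `f(x, u(0))`. Its cost exceeds
`V_N*(x) - ℓ(x, u(0))` by at most the admissibility slack `a ℓ(x, u(0))`, so
`V_N*(f(x, u(0))) ≤ V_N*(x) - (1 - a) ℓ(x, u(0))`. Once `a ≤ 1 - ā`, the nonnegative values
`V_N*(x(k))` decrease by at least `ā α₁(‖x(k)‖)`, which is therefore summable, so `x(k) → 0`.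
-/

open Finset Filter Topology

section Trajectory

variable {S I : Type*} (f : S → I → S)

lemma traj_succ' (x : S) (v : ℕ → I) (i : ℕ) :
    traj f x v (i + 1) = traj f (f x (v 0)) (fun j => v (j + 1)) i := by
  induction i with
  | zero => rfl
  | succ i ih => exact congrArg (f · (v (i + 1))) ih

lemma traj_congr {x : S} {u v : ℕ → I} {i : ℕ} (h : ∀ j < i, u j = v j) :
    traj f x u i = traj f x v i := by
  induction i with
  | zero => rfl
  | succ i ih =>
    show f _ (u i) = f _ (v i)
    rw [ih fun j hj => h j (by omega), h i (by omega)]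

lemma sum_stage_congr (l : S → I → ℝ) {x : S} {u v : ℕ → I} {K : ℕ} (h : ∀ j < K, u j = v j) :
    ∑ i ∈ range K, l (traj f x u i) (u i) = ∑ i ∈ range K, l (traj f x v i) (v i) :=
  sum_congr rfl fun i hi => by
    rw [traj_congr f fun j hj => h j (by rw [mem_range] at hi; omega), h i (mem_range.1 hi)]

def spliceAt (M : ℕ) (u v : ℕ → I) : ℕ → I := fun i => if i < M then u i else v i

variable {x : S} {u v : ℕ → I} {M i : ℕ}

lemma spliceAt_of_lt (h : i < M) : spliceAt M u v i = u i := if_pos h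

lemma spliceAt_of_le (h : M ≤ i) : spliceAt M u v i = v i := if_neg (not_lt.2 h)

lemma traj_spliceAt_of_le (h : i ≤ M) : traj f x (spliceAt M u v) i = traj f x u i :=
  traj_congr f fun _ hj => spliceAt_of_lt (by omega)

lemma traj_spliceAt_of_ge (hmeet : traj f x u M = traj f x v M) (h : M ≤ i) :
    traj f x (spliceAt M u v) i = traj f x v i := by
  induction i, h using Nat.le_induction with
  | base => rw [traj_spliceAt_of_le f le_rfl, hmeet]
  | succ i hi ih =>
    show f _ _ = f _ _
    rw [ih, spliceAt_of_le hi]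

lemma sum_stage_spliceAt (l : S → I → ℝ) {K : ℕ} (hMK : M ≤ K)
    (hmeet : traj f x u M = traj f x v M) :
    ∑ i ∈ range K, l (traj f x (spliceAt M u v) i) (spliceAt M u v i) =
      ∑ i ∈ range K, l (traj f x v i) (v i) +
        (∑ i ∈ range M, l (traj f x u i) (u i) - ∑ i ∈ range M, l (traj f x v i) (v i)) := by
  rw [← sum_range_add_sum_Ico _ hMK, ← sum_range_add_sum_Ico _ hMK,
    sum_stage_congr f l fun j hj => spliceAt_of_lt hj]
  have htail : ∑ i ∈ Ico M K, l (traj f x (spliceAt M u v) i) (spliceAt M u v i) =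
      ∑ i ∈ Ico M K, l (traj f x v i) (v i) :=
    sum_congr rfl fun i hi => by
      rw [traj_spliceAt_of_ge f hmeet (mem_Ico.1 hi).1, spliceAt_of_le (mem_Ico.1 hi).1]
  rw [htail]
  ring

end Trajectory

section ValueFunction

variable {S I : Type*} {f : S → I → S} {X : Set S} {U : Set I} {Xf : Set S}
  {l : S → I → ℝ} {Vf : S → ℝ} {N : ℕ} {x : S} {v : ℕ → I}

lemma mpcCost_nonneg (hl : ∀ y w, 0 ≤ l y w) (hVf : ∀ y, 0 ≤ Vf y) :
    0 ≤ mpcCost f l Vf N x v :=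
  add_nonneg (sum_nonneg fun _ _ => hl _ _) (hVf _)

lemma VStar_nonneg (hl : ∀ y w, 0 ≤ l y w) (hVf : ∀ y, 0 ≤ Vf y) :
    0 ≤ VStar f X U Xf l Vf N x :=
  Real.sInf_nonneg <| by
    rintro _ ⟨v, -, rfl⟩
    exact mpcCost_nonneg hl hVf

lemma VStar_le_mpcCost (hl : ∀ y w, 0 ≤ l y w) (hVf : ∀ y, 0 ≤ Vf y)
    (hv : Feasible f X U Xf N x v) : VStar f X U Xf l Vf N x ≤ mpcCost f l Vf N x v :=
  csInf_le ⟨0, by rintro _ ⟨w, -, rfl⟩; exact mpcCost_nonneg hl hVf⟩ ⟨v, hv, rfl⟩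

lemma OptPair.VStar_eq {z : ℕ → S} (h : OptPair f X U Xf l Vf N x v z) :
    VStar f X U Xf l Vf N x = mpcCost f l Vf N x v :=
  IsLeast.csInf_eq ⟨⟨v, h.1, rfl⟩, by rintro _ ⟨w, hw, rfl⟩; exact h.2.2 w hw⟩

end ValueFunction

section Candidate

variable {S I : Type*} {f : S → I → S} {X : Set S} {U : Set I} {Xf : Set S}
  {l : S → I → ℝ} {Vf : S → ℝ} {N : ℕ} {x : S} {v : ℕ → I}

lemma Feasible.exists_extend (hXfX : Xf ⊆ X)
    (hterm : ∀ y ∈ Xf, ∃ w ∈ U, f y w ∈ Xf ∧ Vf (f y w) ≤ Vf y - l y w)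
    (hv : Feasible f X U Xf N x v) :
    ∃ v', Feasible f X U Xf (N + 1) x v' ∧
      mpcCost f l Vf (N + 1) x v' ≤ mpcCost f l Vf N x v ∧ ∀ i < N, v' i = v i := by
  obtain ⟨w, hwU, hwXf, hwV⟩ := hterm _ hv.2
  have hN : traj f x (spliceAt N v fun _ => w) N = traj f x v N :=
    traj_spliceAt_of_le f le_rfl
  have hwN : spliceAt N v (fun _ => w) N = w := spliceAt_of_le le_rfl
  have hN1 : traj f x (spliceAt N v fun _ => w) (N + 1) = f (traj f x v N) w := by
    show f _ _ = _
    rw [hN, hwN]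
  refine ⟨spliceAt N v fun _ => w, ⟨fun i hi => ?_, hN1 ▸ hwXf⟩, ?_,
    fun i hi => spliceAt_of_lt hi⟩
  · rcases Nat.lt_succ_iff_lt_or_eq.1 hi with hi | rfl
    · rw [traj_spliceAt_of_le f hi.le, spliceAt_of_lt hi]
      exact hv.1 i hi
    · rw [hN, hwN]
      exact ⟨hXfX hv.2, hwU⟩
  · unfold mpcCost
    rw [sum_range_succ, hN1, hN, hwN, sum_stage_congr f l fun j hj => spliceAt_of_lt hj]
    linarith

variable {u : ℕ → I} {M K : ℕ} {a : ℝ} {z : ℕ → S}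

lemma Feasible.spliceAt (hv : Feasible f X U Xf K x v) (hMK : M ≤ K)
    (hu : ∀ i < M, traj f x u i ∈ X ∧ u i ∈ U) (hmeet : traj f x u M = traj f x v M) :
    Feasible f X U Xf K x (spliceAt M u v) := by
  refine ⟨fun i hi => ?_, traj_spliceAt_of_ge f hmeet hMK ▸ hv.2⟩
  rcases lt_or_ge i M with h | h
  · rw [traj_spliceAt_of_le f h.le, spliceAt_of_lt h]
    exact hu i h
  · rw [traj_spliceAt_of_ge f hmeet h, spliceAt_of_le h]
    exact hv.1 i hi

lemma mpcCost_spliceAt (hMK : M ≤ K) (hmeet : traj f x u M = traj f x v M) :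
    mpcCost f l Vf K x (spliceAt M u v) = mpcCost f l Vf K x v +
      (∑ i ∈ range M, l (traj f x u i) (u i) - ∑ i ∈ range M, l (traj f x v i) (v i)) := by
  unfold mpcCost
  rw [sum_stage_spliceAt f l hMK hmeet, traj_spliceAt_of_ge f hmeet hMK]
  ring

lemma Feasible.shift (hv : Feasible f X U Xf (N + 1) x v) :
    Feasible f X U Xf N (f x (v 0)) fun j => v (j + 1) :=
  ⟨fun i hi => traj_succ' f x v i ▸ hv.1 (i + 1) (by omega), traj_succ' f x v N ▸ hv.2⟩

lemma mpcCost_shift :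
    mpcCost f l Vf N (f x (v 0)) (fun j => v (j + 1)) =
      mpcCost f l Vf (N + 1) x v - l x (v 0) := by
  simp only [mpcCost, sum_range_succ', traj_succ']
  rw [show traj f x v 0 = x from rfl]
  ring

theorem Adm.VStar_le (hl : ∀ y w, 0 ≤ l y w) (hVf : ∀ y, 0 ≤ Vf y) (hXfX : Xf ⊆ X)
    (hterm : ∀ y ∈ Xf, ∃ w ∈ U, f y w ∈ Xf ∧ Vf (f y w) ≤ Vf y - l y w)
    (hM1 : 1 ≤ M) (hMN : M ≤ N) (hopt : OptPair f X U Xf l Vf N x v z)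
    (hadm : Adm f X U l a M x v z u) :
    VStar f X U Xf l Vf N (f x (u 0)) ≤ VStar f X U Xf l Vf N x - (1 - a) * l x (u 0) := by
  obtain ⟨hu, hslack, hmeet⟩ := hadm
  obtain ⟨v', hv'feas, hv'cost, hv'v⟩ := hopt.1.exists_extend (l := l) hXfX hterm
  have hv'M : ∀ j < M, v' j = v j := fun j hj => hv'v j (by omega)
  have hmeet' : traj f x u M = traj f x v' M := by
    rw [hmeet, hopt.2.1, traj_congr f fun j hj => (hv'v j (by omega)).symm]
  have hfirst : spliceAt M u v' 0 = u 0 := spliceAt_of_lt hM1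
  have hnext := (hv'feas.spliceAt (by omega) hu hmeet').shift
  rw [hfirst] at hnext
  calc VStar f X U Xf l Vf N (f x (u 0))
      ≤ mpcCost f l Vf N (f x (u 0)) (fun j => spliceAt M u v' (j + 1)) :=
        VStar_le_mpcCost hl hVf hnext
    _ = mpcCost f l Vf (N + 1) x (spliceAt M u v') - l x (u 0) := by
        rw [← hfirst, mpcCost_shift, hfirst]
    _ = mpcCost f l Vf (N + 1) x v' + (∑ i ∈ range M, l (traj f x u i) (u i)
          - ∑ i ∈ range M, l (traj f x v' i) (v' i)) - l x (u 0) := by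
        rw [mpcCost_spliceAt (by omega) hmeet']
    _ ≤ VStar f X U Xf l Vf N x - (1 - a) * l x (u 0) := by
        have hz : ∑ i ∈ range M, l (traj f x v i) (v i) = ∑ i ∈ range M, l (z i) (v i) :=
          sum_congr rfl fun i _ => by rw [hopt.2.1]
        rw [hopt.VStar_eq, sum_stage_congr f l hv'M, hz]
        linarith

end Candidate

lemma tendsto_zero_of_succ_le_sub {V c : ℕ → ℝ} {K : ℕ} (hV : ∀ k, 0 ≤ V k)
    (hc : ∀ k, 0 ≤ c k) (hdec : ∀ k, K ≤ k → V (k + 1) ≤ V k - c k) :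
    Tendsto c atTop (𝓝 0) := by
  rw [← tendsto_add_atTop_iff_nat K]
  have htelescope : ∀ n, ∑ i ∈ range n, c (i + K) ≤ V K - V (n + K) := by
    intro n
    induction n with
    | zero => simp
    | succ n ih =>
      rw [sum_range_succ, Nat.add_right_comm]
      linarith [hdec (n + K) (by omega)]
  exact (summable_of_sum_range_le (fun _ => hc _)
    fun n => (htelescope n).trans (sub_le_self _ (hV _))).tendsto_atTop_zero

lemma tendsto_zero_of_tendsto_comp_of_strictMonoOn {ι : Type*} {L : Filter ι} {α : ℝ → ℝ}
    (hα : StrictMonoOn α (Set.Ici 0)) (hα0 : α 0 = 0) {t : ι → ℝ} (ht : ∀ i, 0 ≤ t i)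
    (h : Tendsto (fun i => α (t i)) L (𝓝 0)) : Tendsto t L (𝓝 0) := by
  refine tendsto_order.2 ⟨fun b hb => Eventually.of_forall fun i => hb.trans_le (ht i),
    fun ε hε => ?_⟩
  have hαε : 0 < α ε := hα0 ▸ hα Set.self_mem_Ici hε.le hε
  filter_upwards [h.eventually_lt_const hαε] with i hi
  exact (hα.lt_iff_lt (ht i) hε.le).1 hi

theorem closed_loop_mode_scheduling_general {n m : ℕ}
    (f : EuclideanSpace ℝ (Fin n) → EuclideanSpace ℝ (Fin m) → EuclideanSpace ℝ (Fin n))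
    (X : Set (EuclideanSpace ℝ (Fin n))) (U : Set (EuclideanSpace ℝ (Fin m)))
    (Xf : Set (EuclideanSpace ℝ (Fin n)))
    (l : EuclideanSpace ℝ (Fin n) → EuclideanSpace ℝ (Fin m) → ℝ)
    (Vf : EuclideanSpace ℝ (Fin n) → ℝ)
    (N : ℕ) (a : ℕ → ℝ) (M : ℕ → ℕ) (α₁ : ℝ → ℝ)
    (hl : ∀ y w, 0 ≤ l y w)
    (hVf : ∀ y, 0 ≤ Vf y)
    (hXfX : Xf ⊆ X)
    (hterm : ∀ y ∈ Xf, ∃ w ∈ U, f y w ∈ Xf ∧ Vf (f y w) ≤ Vf y - l y w)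
    (hα : IsKFun α₁)
    (hαl : ∀ y ∈ X, ∀ w ∈ U, α₁ ‖y‖ ≤ l y w)
    (hM : ∀ k, 1 ≤ M k ∧ M k ≤ N)
    (x : ℕ → EuclideanSpace ℝ (Fin n))
    (u : ℕ → ℕ → EuclideanSpace ℝ (Fin m))
    (vs : ℕ → ℕ → EuclideanSpace ℝ (Fin m))
    (zs : ℕ → ℕ → EuclideanSpace ℝ (Fin n))
    (hloop : ∀ k, OptPair f X U Xf l Vf N (x k) (vs k) (zs k) ∧
      Adm f X U l (a k) (M k) (x k) (vs k) (zs k) (u k) ∧ x (k + 1) = f (x k) (u k 0)) :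
    (∀ k, x k ∈ X ∧ u k 0 ∈ U) ∧
    (∀ (Ks : ℕ) (abar : ℝ), 0 < abar → abar ≤ 1 → (∀ k, Ks ≤ k → a k ≤ 1 - abar) →
      (∀ k, Ks ≤ k → VStar f X U Xf l Vf N (x (k + 1))
          ≤ VStar f X U Xf l Vf N (x k) - abar * α₁ ‖x k‖) ∧
      Filter.Tendsto x Filter.atTop (nhds 0)) := by
  have hsafe : ∀ k, x k ∈ X ∧ u k 0 ∈ U := fun k => (hloop k).2.1.1 0 (hM k).1
  refine ⟨hsafe, fun Ks abar habar0 _ hak => ?_⟩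
  have hα_nonneg : ∀ k, 0 ≤ α₁ ‖x k‖ := fun k =>
    hα.2.2 ▸ hα.2.1.monotoneOn Set.self_mem_Ici (norm_nonneg (x k)) (norm_nonneg _)
  have hdec : ∀ k, Ks ≤ k → VStar f X U Xf l Vf N (x (k + 1))
      ≤ VStar f X U Xf l Vf N (x k) - abar * α₁ ‖x k‖ := by
    intro k hk
    obtain ⟨hopt, hadm, hnext⟩ := hloop k
    have hstep := hadm.VStar_le hl hVf hXfX hterm (hM k).1 (hM k).2 hopt
    have hαl' := hαl _ (hsafe k).1 _ (hsafe k).2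
    rw [hnext]
    nlinarith [hak k hk, hl (x k) (u k 0)]
  refine ⟨hdec, ?_⟩
  have hαx : Tendsto (fun k => α₁ ‖x k‖) atTop (𝓝 0) := by
    simpa [habar0.ne'] using (tendsto_zero_of_succ_le_sub (fun _ => VStar_nonneg hl hVf)
      (fun k => mul_nonneg habar0.le (hα_nonneg k)) hdec).const_mul abar⁻¹
  exact tendsto_zero_iff_norm_tendsto_zero.2
    (tendsto_zero_of_tendsto_comp_of_strictMonoOn hα.2.1 hα.2.2 (fun _ => norm_nonneg _) hαx)

/-- Theorem 2 (time-varying mode scheduling): safety holds for all time, and once the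
scheduling parameter satisfies `a(k) ≤ 1 − ā` for `k ≥ K_s`, the value function decreases
and the state converges to the origin. -/
theorem closed_loop_mode_scheduling {n m : ℕ}
    (f : EuclideanSpace ℝ (Fin n) → EuclideanSpace ℝ (Fin m) → EuclideanSpace ℝ (Fin n))
    (X : Set (EuclideanSpace ℝ (Fin n))) (U : Set (EuclideanSpace ℝ (Fin m)))
    (Xf : Set (EuclideanSpace ℝ (Fin n)))
    (l : EuclideanSpace ℝ (Fin n) → EuclideanSpace ℝ (Fin m) → ℝ)
    (Vf : EuclideanSpace ℝ (Fin n) → ℝ)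
    (N : ℕ) (a : ℕ → ℝ) (M : ℕ → ℕ) (α₁ : ℝ → ℝ)
    (hl : ∀ y w, 0 ≤ l y w)
    (hVf : ∀ y, 0 ≤ Vf y)
    (hXfX : Xf ⊆ X)
    (hterm : ∀ y ∈ Xf, ∃ w ∈ U, f y w ∈ Xf ∧ Vf (f y w) ≤ Vf y - l y w)
    (hα : IsKFun α₁)
    (hαl : ∀ y ∈ X, ∀ w ∈ U, α₁ ‖y‖ ≤ l y w)
    (ha : ∀ k, 0 ≤ a k)
    (hM : ∀ k, 1 ≤ M k ∧ M k ≤ N)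
    (x : ℕ → EuclideanSpace ℝ (Fin n))
    (u : ℕ → ℕ → EuclideanSpace ℝ (Fin m))
    (vs : ℕ → ℕ → EuclideanSpace ℝ (Fin m))
    (zs : ℕ → ℕ → EuclideanSpace ℝ (Fin n))
    (hloop : ∀ k, OptPair f X U Xf l Vf N (x k) (vs k) (zs k) ∧
      Adm f X U l (a k) (M k) (x k) (vs k) (zs k) (u k) ∧ x (k + 1) = f (x k) (u k 0)) :
    (∀ k, x k ∈ X ∧ u k 0 ∈ U) ∧
    (∀ (Ks : ℕ) (abar : ℝ), 0 < abar → abar ≤ 1 → (∀ k, Ks ≤ k → a k ≤ 1 - abar) →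
      (∀ k, Ks ≤ k → VStar f X U Xf l Vf N (x (k + 1))
          ≤ VStar f X U Xf l Vf N (x k) - abar * α₁ ‖x k‖) ∧
      Filter.Tendsto x Filter.atTop (nhds 0)) :=
  closed_loop_mode_scheduling_general f X U Xf l Vf N a M α₁ hl hVf hXfX hterm hα hαl hM x u vs zs
    hloop
end

section
/- (Proposition 6: monotonicity in the filter horizon M.) Let (v*, z*) be an optimal pair for P_N(x), let a ∈ ℝ, and let 1 ≤ j ≤ i ≤ N. If u = (u(0),…,u(j−1)) is (a,j)-admissible at x, then the extended sequence (u(0),…,u(j−1), v*(j),…,v*(i−1)) is (a,i)-admissible at x. Consequently, the safety–stability sets satisfy the nested inclusion 𝕊_j(x) ⊆ 𝕊_i(x), where 𝕊_M(x) denotes the safety–stability set with filter horizon M. -/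
/-!
Replacing the first `j` inputs of the nominal optimal sequence `v*` by an `(a, j)`-admissible
`u` steers the state to `z*(j)`, after which the spliced trajectory coincides with `z*`.
So on `[j, i)` the states and inputs are those of `v*`, which are feasible because `i ≤ N`,
and the stage costs on `[j, i)` cancel in the cost difference, leaving the `(a, j)` bound.
-/

section Splice

variable {S I : Type*}

def splice (j : ℕ) (u v : ℕ → I) : ℕ → I := fun k => if k < j then u k else v k

lemma splice_of_lt {j k : ℕ} (u v : ℕ → I) (hk : k < j) : splice j u v k = u k :=
  if_pos hk

lemma splice_of_le {j k : ℕ} (u v : ℕ → I) (hk : j ≤ k) : splice j u v k = v k :=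
  if_neg (Nat.not_lt.mpr hk)

lemma traj_eq_of_forall_lt (f : S → I → S) (x : S) {u w : ℕ → I} :
    ∀ {k}, (∀ m < k, u m = w m) → traj f x u k = traj f x w k
  | 0, _ => rfl
  | k + 1, h => by
    simp only [traj, traj_eq_of_forall_lt f x fun m hm => h m (Nat.lt_succ_of_lt hm),
      h k (Nat.lt_succ_self k)]

lemma traj_splice_of_le (f : S → I → S) (x : S) {j k : ℕ} (u v : ℕ → I) (hk : k ≤ j) :
    traj f x (splice j u v) k = traj f x u k :=
  traj_eq_of_forall_lt f x fun _ hm => splice_of_lt u v (hm.trans_le hk)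

lemma traj_splice_of_ge (f : S → I → S) (x : S) {j : ℕ} {u v : ℕ → I}
    (hj : traj f x u j = traj f x v j) :
    ∀ {k}, j ≤ k → traj f x (splice j u v) k = traj f x v k
  | 0, hk => by rw [Nat.le_zero.mp hk] at hj ⊢; exact hj
  | k + 1, hk => by
    rcases Nat.lt_or_ge k j with hkj | hkj
    · rw [show j = k + 1 by omega] at hj ⊢
      rw [traj_splice_of_le f x u v le_rfl, hj]
    · simp only [traj, traj_splice_of_ge f x hj hkj, splice_of_le u v hkj]

end Splice

section Admissible

variable {S I : Type*} {f : S → I → S} {X : Set S} {U : Set I} {l : S → I → ℝ}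
  {a : ℝ} {i j : ℕ} {x : S} {v u : ℕ → I} {z : ℕ → S}

theorem Adm.splice_nominal (hv : ∀ k < i, traj f x v k ∈ X ∧ v k ∈ U)
    (hz : ∀ k, z k = traj f x v k) (hj : 0 < j) (hji : j ≤ i)
    (hu : Adm f X U l a j x v z u) : Adm f X U l a i x v z (splice j u v) := by
  obtain ⟨hu_mem, hu_cost, hu_end⟩ := hu
  have h_meet : traj f x u j = traj f x v j := hu_end.trans (hz j)
  have h_head : ∀ k < j,
      traj f x (splice j u v) k = traj f x u k ∧ splice j u v k = u k := fun k hk =>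
    ⟨traj_splice_of_le f x u v hk.le, splice_of_lt u v hk⟩
  have h_tail : ∀ k, j ≤ k →
      traj f x (splice j u v) k = traj f x v k ∧ splice j u v k = v k := fun k hk =>
    ⟨traj_splice_of_ge f x h_meet hk, splice_of_le u v hk⟩
  refine ⟨fun k hk => ?_, ?_, ?_⟩
  · rcases Nat.lt_or_ge k j with hkj | hkj
    · rw [(h_head k hkj).1, (h_head k hkj).2]; exact hu_mem k hkj
    · rw [(h_tail k hkj).1, (h_tail k hkj).2]; exact hv k hk
  · have h_sum_head : ∑ k ∈ Finset.range j, l (traj f x (splice j u v) k) (splice j u v k)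
        = ∑ k ∈ Finset.range j, l (traj f x u k) (u k) :=
      Finset.sum_congr rfl fun k hk => by
        rw [(h_head k (Finset.mem_range.mp hk)).1, (h_head k (Finset.mem_range.mp hk)).2]
    have h_sum_tail : ∑ k ∈ Finset.Ico j i, l (traj f x (splice j u v) k) (splice j u v k)
        = ∑ k ∈ Finset.Ico j i, l (z k) (v k) :=
      Finset.sum_congr rfl fun k hk => by
        rw [(h_tail k (Finset.mem_Ico.mp hk).1).1, (h_tail k (Finset.mem_Ico.mp hk).1).2, hz k]
    rw [← Finset.sum_range_add_sum_Ico _ hji, ← Finset.sum_range_add_sum_Ico _ hji,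
      h_sum_head, h_sum_tail, splice_of_lt u v hj]
    linarith
  · rw [(h_tail i hji).1, hz i]

theorem S2Set_mono_horizon (hv : ∀ k < i, traj f x v k ∈ X ∧ v k ∈ U)
    (hz : ∀ k, z k = traj f x v k) (hj : 0 < j) (hji : j ≤ i) :
    S2Set f X U l a j x v z ⊆ S2Set f X U l a i x v z := by
  rintro w ⟨u, hu, rfl⟩
  exact ⟨splice j u v, hu.splice_nominal hv hz hj hji, splice_of_lt u v hj⟩

end Admissible

/-- Proposition 6: monotonicity in the filter horizon. Extending an `(a, j)`-admissible
sequence by the nominal optimal inputs gives an `(a, i)`-admissible sequence, hence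
`𝕊_j(x) ⊆ 𝕊_i(x)` for `j ≤ i`. -/
theorem sset_monotone_in_horizon {n m : ℕ}
    (f : EuclideanSpace ℝ (Fin n) → EuclideanSpace ℝ (Fin m) → EuclideanSpace ℝ (Fin n))
    (X : Set (EuclideanSpace ℝ (Fin n))) (U : Set (EuclideanSpace ℝ (Fin m)))
    (Xf : Set (EuclideanSpace ℝ (Fin n)))
    (l : EuclideanSpace ℝ (Fin n) → EuclideanSpace ℝ (Fin m) → ℝ)
    (Vf : EuclideanSpace ℝ (Fin n) → ℝ)
    (N i j : ℕ) (a : ℝ) (x : EuclideanSpace ℝ (Fin n))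
    (vs : ℕ → EuclideanSpace ℝ (Fin m)) (zs : ℕ → EuclideanSpace ℝ (Fin n))
    (hj1 : 1 ≤ j) (hji : j ≤ i) (hiN : i ≤ N)
    (hopt : OptPair f X U Xf l Vf N x vs zs) :
    (∀ u, Adm f X U l a j x vs zs u →
      Adm f X U l a i x vs zs (fun k => if k < j then u k else vs k)) ∧
    S2Set f X U l a j x vs zs ⊆ S2Set f X U l a i x vs zs := by
  obtain ⟨⟨hv, -⟩, hz, -⟩ := hopt
  have hv_i : ∀ k < i, traj f x vs k ∈ X ∧ vs k ∈ U := fun k hk => hv k (hk.trans_le hiN)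
  exact ⟨fun u hu => hu.splice_nominal hv_i hz hj1 hji, S2Set_mono_horizon hv_i hz hj1 hji⟩
end
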